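/- T_TandG[M̂,F] ≤ T_rec[M̂]: for every time-and-graph TGNN T = (M_1,M_2,Cell,out) with M_1, M_2 ∈ M̂ having the same number of layers and Cell ∈ F, there exists a recursive TGNN T' = (M_3,out) with M_3 ∈ M̂ such that for every discrete pointed temporal graph (TG,v): T(TG,v) = 1 if and only if T'(TG,v) = 1. -/

import Mathlib

set_option maxHeartbeats 1000000

/-! ### Vectors -/

/-- Real vectors of dimension `d`. -/
abbrev Vec (d : ℕ) := Fin d → ℝ

/-- Cast a vector along an equality of dimensions. -/
def Vec.cast {m n : ℕ} (h : m = n) (x : Vec m) : Vec n := fun j => x (Fin.cast h.symm j)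

/-- Truncated ReLU. -/
noncomputable def trReLU (x : ℝ) : ℝ := max 0 (min 1 x)

/-- A single FNN layer: an affine map with rational weights followed by entrywise trReLU. -/
structure AffineLayer (m n : ℕ) where
  weight : Fin n → Fin m → ℚ
  bias : Fin n → ℚ

noncomputable def AffineLayer.eval {m n : ℕ} (l : AffineLayer m n) (x : Vec m) : Vec n :=
  fun j => trReLU ((∑ i, (l.weight j i : ℝ) * x i) + (l.bias j : ℝ))

/-- A feedforward neural network with trReLU activations,
of input dimension `m` and output dimension `n`. -/
structure FNN (m n : ℕ) where
  depth : ℕ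
  dims : ℕ → ℕ
  dim_in : dims 0 = m
  dim_out : dims depth = n
  layers : ∀ i : ℕ, AffineLayer (dims i) (dims (i + 1))

noncomputable def FNN.evalAux {m n : ℕ} (N : FNN m n) : (i : ℕ) → Vec (N.dims 0) → Vec (N.dims i)
  | 0, x => x
  | i + 1, x => (N.layers i).eval (N.evalAux i x)

noncomputable def FNN.eval {m n : ℕ} (N : FNN m n) (x : Vec m) : Vec n :=
  Vec.cast N.dim_out (N.evalAux N.depth (Vec.cast N.dim_in.symm x))

/-! ### Message-passing GNNs -/

/-- A general message-passing GNN: a finite sequence of layers, each consisting of an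
arbitrary multiset-aggregation function and an arbitrary combination function. -/
structure MPNN where
  depth : ℕ
  dims : ℕ → ℕ
  aggDims : ℕ → ℕ
  agg : ∀ i : ℕ, Multiset (Vec (dims i)) → Vec (aggDims i)
  comb : ∀ i : ℕ, Vec (dims i) → Vec (aggDims i) → Vec (dims (i + 1))

/-- Embeddings computed by an MPNN on a labelled graph (given by a symmetric boolean
adjacency function and a labelling `c`). -/
noncomputable def MPNN.emb (M : MPNN) {V : Type} [Fintype V] [DecidableEq V]
    (adj : V → V → Bool) (c : V → Vec (M.dims 0)) : (i : ℕ) → V → Vec (M.dims i)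
  | 0 => c
  | i + 1 => fun v =>
      M.comb i (M.emb adj c i v)
        (M.agg i ((Finset.univ.filter fun u => adj v u = true).val.map
          fun u => M.emb adj c i u))

/-- The final embedding `M(G,v)`. -/
noncomputable def MPNN.run (M : MPNN) {V : Type} [Fintype V] [DecidableEq V]
    (adj : V → V → Bool) (c : V → Vec (M.dims 0)) (v : V) : Vec (M.dims M.depth) :=
  M.emb adj c M.depth v

/-- Entrywise sum of a multiset of vectors. -/
noncomputable def sumAgg (d : ℕ) (S : Multiset (Vec d)) : Vec d :=
  fun j => (S.map fun x => x j).sum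

/-- The class `M̂`: MPNNs whose combination functions are realised by FNNs with trReLU
activations and whose aggregation is the entrywise sum of the multiset. -/
structure MPNNhat where
  depth : ℕ
  dims : ℕ → ℕ
  comb : ∀ i : ℕ, FNN (dims i + dims i) (dims (i + 1))

noncomputable def MPNNhat.toMPNN (M : MPNNhat) : MPNN where
  depth := M.depth
  dims := M.dims
  aggDims := M.dims
  agg := fun i => sumAgg (M.dims i)
  comb := fun i x y => (M.comb i).eval (Fin.append x y)

/-! ### Discrete temporal graphs -/

/-- A discrete temporal graph over vertex set `V` with `k` colours: a sequence of `len`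
snapshots (indexed `0, …, len - 1`, the timestamp of index `i` being `i + 1`), each with a
symmetric set of undirected edges and a `{0,1}`-colouring of the nodes. -/
structure TemporalGraph (V : Type) (k : ℕ) where
  len : ℕ
  len_pos : 0 < len
  adj : ℕ → V → V → Bool
  symm : ∀ i u w, adj i u w = adj i w u
  label : ℕ → V → Fin k → Bool

/-- The colour vector of node `v` at time index `i`, as a real vector. -/
noncomputable def TemporalGraph.colVec {V : Type} {k : ℕ} (TG : TemporalGraph V k)
    (i : ℕ) (v : V) : Vec k :=
  fun j => if TG.label i v j then 1 else 0

/-! ### The product logic PTL_{P,Y} × K -/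

/-- Formulas of the product logic `PTL_{P,Y} × K` over `k` colour propositions. -/
inductive PTLK (k : ℕ) : Type where
  | colour : Fin k → PTLK k
  | not : PTLK k → PTLK k
  | and : PTLK k → PTLK k → PTLK k
  | dia : PTLK k → PTLK k
  | yest : PTLK k → PTLK k
  | past : PTLK k → PTLK k

/-- Satisfaction of a formula at timestamped node `(v, i)` (time indices start at `0`). -/
def Sat {V : Type} {k : ℕ} (TG : TemporalGraph V k) : PTLK k → ℕ → V → Prop
  | .colour j, i, v => TG.label i v j = true
  | .not φ, i, v => ¬ Sat TG φ i v
  | .and φ ψ, i, v => Sat TG φ i v ∧ Sat TG ψ i v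
  | .dia φ, i, v => ∃ u : V, TG.adj i v u = true ∧ Sat TG φ i u
  | .yest φ, i, v => 0 < i ∧ Sat TG φ (i - 1) v
  | .past φ, i, v => ∃ j < i, Sat TG φ j v

/-- The list of subformulas of a formula (containing the formula itself). -/
def PTLK.subformulas {k : ℕ} : PTLK k → List (PTLK k)
  | .colour j => [.colour j]
  | .not φ => .not φ :: φ.subformulas
  | .and φ ψ => .and φ ψ :: (φ.subformulas ++ ψ.subformulas)
  | .dia φ => .dia φ :: φ.subformulas
  | .yest φ => .yest φ :: φ.subformulas
  | .past φ => .past φ :: φ.subformulas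

/-- A formula is temporal if its outermost operator is `Y` or `P`. -/
def PTLK.isTemporal {k : ℕ} : PTLK k → Prop
  | .yest _ => True
  | .past _ => True
  | _ => False

/-- A formula is atomic if it is a colour proposition. -/
def PTLK.isAtomic {k : ℕ} : PTLK k → Prop
  | .colour _ => True
  | _ => False

/-! ### Recursive TGNNs over M̂ -/

/-- A recursive TGNN `T = (M, out)` with `M ∈ M̂`: the input dimension of `M` is
`k + d` where `d` is the output dimension of `M`, and `out` is a single-layer FNN with
trReLU activation. -/
structure RecTGNN (k : ℕ) where
  M : MPNNhat
  dim_in : M.dims 0 = k + M.dims M.depth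
  out : AffineLayer (M.dims M.depth) 1

/-- The state `h_v^{(depth)}(t_i)` computed by a recursive TGNN. -/
noncomputable def RecTGNN.state {k : ℕ} (T : RecTGNN k) {V : Type} [Fintype V] [DecidableEq V]
    (TG : TemporalGraph V k) : ℕ → V → Vec (T.M.dims T.M.depth)
  | 0 => fun v => T.M.toMPNN.run (TG.adj 0)
      (fun u => Vec.cast T.dim_in.symm (Fin.append (TG.colVec 0 u) (fun _ => 0))) v
  | i + 1 => fun v => T.M.toMPNN.run (TG.adj (i + 1))
      (fun u => Vec.cast T.dim_in.symm (Fin.append (TG.colVec (i + 1) u) (T.state TG i u))) v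

/-- The input labelling `h_v^{(0)}(t_i)` fed to `M` at time index `i`. -/
noncomputable def RecTGNN.input {k : ℕ} (T : RecTGNN k) {V : Type} [Fintype V] [DecidableEq V]
    (TG : TemporalGraph V k) : ℕ → V → Vec (T.M.dims 0)
  | 0 => fun u => Vec.cast T.dim_in.symm (Fin.append (TG.colVec 0 u) (fun _ => 0))
  | i + 1 => fun u => Vec.cast T.dim_in.symm (Fin.append (TG.colVec (i + 1) u) (T.state TG i u))

/-- The output `T(TG, v)` of a recursive TGNN at the last time index. -/
noncomputable def RecTGNN.output {k : ℕ} (T : RecTGNN k) {V : Type} [Fintype V] [DecidableEq V]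
    (TG : TemporalGraph V k) (v : V) : ℝ :=
  T.out.eval (T.state TG (TG.len - 1) v) 0

/-- `T` captures `φ`: on every discrete pointed temporal graph, `T` outputs `1`
iff `φ` is satisfied at the distinguished node at the last timestamp. -/
def RecTGNN.captures {k : ℕ} (T : RecTGNN k) (φ : PTLK k) : Prop :=
  ∀ (V : Type) [Fintype V] [DecidableEq V], ∀ (TG : TemporalGraph V k) (v : V),
    Sat TG φ (TG.len - 1) v ↔ T.output TG v = 1

/-! ### Time-and-graph TGNNs -/

/-- A time-and-graph TGNN `T = (M₁, M₂, Cell, out)` with arbitrary MPNNs `M₁, M₂` (of the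
same number of layers), arbitrary cell function and arbitrary output function. -/
structure TandGTGNN (k : ℕ) where
  M₁ : MPNN
  M₂ : MPNN
  sameDepth : M₁.depth = M₂.depth
  hdim : ℕ
  dim1 : M₁.dims 0 = k
  dim2 : M₂.dims 0 = hdim
  cell : Vec (M₁.dims M₁.depth) → Vec (M₂.dims M₂.depth) → Vec hdim
  out : Vec hdim → ℝ

noncomputable def TandGTGNN.state {k : ℕ} (T : TandGTGNN k) {V : Type} [Fintype V]
    [DecidableEq V] (TG : TemporalGraph V k) : ℕ → V → Vec T.hdim
  | 0 => fun v => T.cell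
      (T.M₁.run (TG.adj 0) (fun u => Vec.cast T.dim1.symm (TG.colVec 0 u)) v)
      (T.M₂.run (TG.adj 0) (fun _ => Vec.cast T.dim2.symm (fun _ => 0)) v)
  | i + 1 => fun v => T.cell
      (T.M₁.run (TG.adj (i + 1)) (fun u => Vec.cast T.dim1.symm (TG.colVec (i + 1) u)) v)
      (T.M₂.run (TG.adj (i + 1)) (fun u => Vec.cast T.dim2.symm (T.state TG i u)) v)

noncomputable def TandGTGNN.output {k : ℕ} (T : TandGTGNN k) {V : Type} [Fintype V]
    [DecidableEq V] (TG : TemporalGraph V k) (v : V) : ℝ :=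
  T.out (T.state TG (TG.len - 1) v)

def TandGTGNN.captures {k : ℕ} (T : TandGTGNN k) (φ : PTLK k) : Prop :=
  ∀ (V : Type) [Fintype V] [DecidableEq V], ∀ (TG : TemporalGraph V k) (v : V),
    Sat TG φ (TG.len - 1) v ↔ T.output TG v = 1

/-- Membership of a time-and-graph TGNN in the class `T_TandG[M̂, F]`: both MPNNs lie in
`M̂`, the cell is a single-layer FNN with trReLU activations, and so is the output. -/
def TandGTGNN.inHatF {k : ℕ} (T : TandGTGNN k) : Prop :=
  (∃ N₁ : MPNNhat, T.M₁ = N₁.toMPNN) ∧ (∃ N₂ : MPNNhat, T.M₂ = N₂.toMPNN) ∧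
  (∃ C : AffineLayer (T.M₁.dims T.M₁.depth + T.M₂.dims T.M₂.depth) T.hdim,
     ∀ x y, T.cell x y = C.eval (Fin.append x y)) ∧
  (∃ O : AffineLayer T.hdim 1, ∀ x, T.out x = O.eval x 0)

/-! ### Global TGNNs -/

/-- An operation combining an embedding vector with a time-feature vector of dimension `m`. -/
structure GlobOp (m : ℕ) where
  cdim : ℕ → ℕ
  op : ∀ d : ℕ, Vec d → Vec m → Vec (cdim d)

/-- A global TGNN `T = (M, φ', out)` with arbitrary MPNN components, arbitrary time
function, arbitrary combining operation and arbitrary output function. -/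
structure GlobTGNN (k : ℕ) where
  tdim : ℕ
  circ : GlobOp tdim
  timeFn : ℝ → Vec tdim
  depth : ℕ
  dims : ℕ → ℕ
  dim_in : dims 0 = k
  aggDims : ℕ → ℕ
  agg : ∀ i : ℕ, Multiset (Vec (circ.cdim (dims i))) → Vec (aggDims i)
  comb : ∀ i : ℕ, Vec (dims i) → Vec (aggDims i) → Vec (dims (i + 1))
  out : Vec (dims depth) → ℝ

/-- The embeddings `h_v^{(i)}(t_j)` computed by a global TGNN. -/
noncomputable def GlobTGNN.emb {k : ℕ} (T : GlobTGNN k) {V : Type} [Fintype V] [DecidableEq V]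
    (TG : TemporalGraph V k) : (i : ℕ) → ℕ → V → Vec (T.dims i)
  | 0 => fun j v => Vec.cast T.dim_in.symm (TG.colVec j v)
  | i + 1 => fun j v =>
      T.comb i (T.emb TG i j v)
        (T.agg i ((Finset.range (j + 1)).val.bind fun h =>
          (Finset.univ.filter fun u => TG.adj h v u = true).val.map
            fun u => T.circ.op _ (T.emb TG i h u) (T.timeFn ((j : ℝ) - (h : ℝ)))))

noncomputable def GlobTGNN.output {k : ℕ} (T : GlobTGNN k) {V : Type} [Fintype V]
    [DecidableEq V] (TG : TemporalGraph V k) (v : V) : ℝ :=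
  T.out (T.emb TG T.depth (TG.len - 1) v)

def GlobTGNN.captures {k : ℕ} (T : GlobTGNN k) (φ : PTLK k) : Prop :=
  ∀ (V : Type) [Fintype V] [DecidableEq V], ∀ (TG : TemporalGraph V k) (v : V),
    Sat TG φ (TG.len - 1) v ↔ T.output TG v = 1

/-- Vector concatenation as the combining operation `∥`. -/
def concatOp (m : ℕ) : GlobOp m where
  cdim := fun d => d + m
  op := fun _ x y => Fin.append x y

/-- A time2vec function. -/
structure Time2Vec (m : ℕ) where
  w : Fin m → ℚ
  b : Fin m → ℚ
  σ : ℝ → ℝ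
  period : ℝ
  period_pos : 0 < period
  periodic : Function.Periodic σ period

noncomputable def Time2Vec.eval {m : ℕ} (f : Time2Vec m) (t : ℝ) : Vec m :=
  fun j => if (j : ℕ) = 0 then (f.w j : ℝ) * t + (f.b j : ℝ)
           else f.σ ((f.w j : ℝ) * t + (f.b j : ℝ))

/-- The class `T_glob[M̂_msg, Q_time2vec, ∥]`: global TGNNs whose MPNN lies in `M̂_msg`
(combination functions given by trReLU FNNs and aggregation `agg S = Σ_{x∈S} msg(x)` with
`msg` a trReLU FNN), whose time function is a time2vec function, and whose combining
operation is vector concatenation; the output is a single-layer trReLU FNN. -/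
structure GlobTGNNmsg (k : ℕ) where
  tdim : ℕ
  timeFn : Time2Vec tdim
  depth : ℕ
  dims : ℕ → ℕ
  dim_in : dims 0 = k
  aggDims : ℕ → ℕ
  msg : ∀ i : ℕ, FNN (dims i + tdim) (aggDims i)
  comb : ∀ i : ℕ, FNN (dims i + aggDims i) (dims (i + 1))
  out : AffineLayer (dims depth) 1

noncomputable def GlobTGNNmsg.toGlob {k : ℕ} (T : GlobTGNNmsg k) : GlobTGNN k where
  tdim := T.tdim
  circ := concatOp T.tdim
  timeFn := T.timeFn.eval
  depth := T.depth
  dims := T.dims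
  dim_in := T.dim_in
  aggDims := T.aggDims
  agg := fun i S => sumAgg (T.aggDims i) (S.map (T.msg i).eval)
  comb := fun i x y => (T.comb i).eval (Fin.append x y)
  out := fun x => (T.out).eval x 0

noncomputable def GlobTGNNmsg.output {k : ℕ} (T : GlobTGNNmsg k) {V : Type} [Fintype V]
    [DecidableEq V] (TG : TemporalGraph V k) (v : V) : ℝ :=
  T.toGlob.output TG v

def GlobTGNNmsg.captures {k : ℕ} (T : GlobTGNNmsg k) (φ : PTLK k) : Prop :=
  ∀ (V : Type) [Fintype V] [DecidableEq V], ∀ (TG : TemporalGraph V k) (v : V),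
    Sat TG φ (TG.len - 1) v ↔ T.output TG v = 1

/-!
In one snapshot a recursive TGNN over `M̂` can compute `Cell(M₁(G_t), M₂(G_t, h(t-1)))` with a
single MPNN whose input is `colours ∥ h(t-1)`: it runs `M₁` and `M₂` one after the other and
carries the input or output of the one not currently running along. A vector survives a layer
of depth `0` (identity combination) as part of `x ∥ Σ x_u`, and a layer of positive depth can
reproduce it through truncated ReLUs, but only if its entries lie in `[0, 1]`. Colours and states
(outputs of `Cell`) lie in `[0, 1]`, and so does the embedding of `M₂` after its last layer of
positive depth. So the MPNN runs `M₂` up to that layer carrying the colours, then `M₁` carrying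
this embedding, then the remaining layers of `M₂` (all of depth `0`) carrying the output of `M₁`,
and finally applies `Cell`. By induction on time the two TGNNs then have the same states, to
which they apply the same output layer.
-/

open Set

lemma trReLU_mem_Icc (x : ℝ) : trReLU x ∈ Icc (0 : ℝ) 1 :=
  ⟨le_max_left _ _, max_le zero_le_one (min_le_left _ _)⟩

lemma trReLU_eq_self {x : ℝ} (h : x ∈ Icc (0 : ℝ) 1) : trReLU x = x := by
  rw [trReLU, min_eq_right h.2, max_eq_right h.1]

lemma Vec.mem_Icc_iff {d : ℕ} {x : Vec d} :
    x ∈ Icc (0 : Vec d) 1 ↔ ∀ i, x i ∈ Icc (0 : ℝ) 1 := by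
  simp only [mem_Icc, Pi.le_def, Pi.zero_apply, Pi.one_apply, forall_and]

lemma Vec.cast_cast {m n p : ℕ} (h : m = n) (h' : n = p) (x : Vec m) :
    Vec.cast h' (Vec.cast h x) = Vec.cast (h.trans h') x := by
  subst h h'; rfl

lemma Vec.cast_append {m m' n n' : ℕ} (h : m = m') (h' : n = n') (x : Vec m) (y : Vec n) :
    Fin.append (Vec.cast h x) (Vec.cast h' y) = Vec.cast (by rw [h, h']) (Fin.append x y) := by
  subst h h'; rfl

lemma Vec.cast_append_cast {m n n' M : ℕ} (h : m + n' = M) (h' : m + n = M) (hn : n = n')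
    (x : Vec m) (y : Vec n) :
    Vec.cast h (Fin.append x (Vec.cast hn y)) = Vec.cast h' (Fin.append x y) := by
  subst hn; rfl

lemma Fin.comp_append {α : Sort*} {m n D : ℕ} (x : Fin D → α) (f : Fin m → Fin D)
    (g : Fin n → Fin D) : x ∘ Fin.append f g = Fin.append (x ∘ f) (x ∘ g) := by
  funext i
  refine Fin.addCases (fun i => ?_) (fun i => ?_) i <;> simp

lemma Fin.append_comp_castAdd {α : Sort*} {m n : ℕ} (x : Fin m → α) (y : Fin n → α) :
    Fin.append x y ∘ Fin.castAdd n = x :=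
  funext (Fin.append_left x y)

lemma Fin.append_comp_natAdd {α : Sort*} {m n : ℕ} (x : Fin m → α) (y : Fin n → α) :
    Fin.append x y ∘ Fin.natAdd m = y :=
  funext (Fin.append_right x y)

lemma sumAgg_map_comp {α : Type} {d d' : ℕ} (S : Multiset α) (f : α → Vec d)
    (σ : Fin d' → Fin d) : sumAgg d (S.map f) ∘ σ = sumAgg d' (S.map fun u => f u ∘ σ) := by
  funext j
  simp [sumAgg, Multiset.map_map]

lemma sumAgg_map_cast {α : Type} {m n : ℕ} (h : m = n) (S : Multiset α) (f : α → Vec m) :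
    sumAgg n (S.map fun u => Vec.cast h (f u)) = Vec.cast h (sumAgg m (S.map f)) := by
  subst h; rfl

namespace AffineLayer

variable {m n : ℕ}

lemma eval_mem_Icc (l : AffineLayer m n) (x : Vec m) : l.eval x ∈ Icc (0 : Vec n) 1 :=
  Vec.mem_Icc_iff.2 fun _ => trReLU_mem_Icc _

def reindex {M : ℕ} (l : AffineLayer m n) (ρ : Fin m → Fin M) : AffineLayer M n :=
  ⟨fun j i' => ∑ i, if ρ i = i' then l.weight j i else 0, l.bias⟩

lemma eval_reindex {M : ℕ} (l : AffineLayer m n) (ρ : Fin m → Fin M) (x : Vec M) :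
    (l.reindex ρ).eval x = l.eval (x ∘ ρ) := by
  funext j
  simp only [eval, reindex, Rat.cast_sum, apply_ite (Rat.cast (K := ℝ)), Rat.cast_zero,
    Finset.sum_mul, ite_mul, zero_mul, Function.comp_apply]
  rw [Finset.sum_comm]
  simp

protected def append {n' : ℕ} (l : AffineLayer m n) (l' : AffineLayer m n') :
    AffineLayer m (n + n') :=
  ⟨Fin.append l.weight l'.weight, Fin.append l.bias l'.bias⟩

lemma eval_append {n' : ℕ} (l : AffineLayer m n) (l' : AffineLayer m n') (x : Vec m) :
    (l.append l').eval x = Fin.append (l.eval x) (l'.eval x) := by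
  funext j
  refine Fin.addCases (fun j => ?_) (fun j => ?_) j <;> simp [eval, AffineLayer.append]

protected def id (m : ℕ) : AffineLayer m m := ⟨fun j i => if j = i then 1 else 0, 0⟩

lemma eval_id {x : Vec m} (hx : x ∈ Icc (0 : Vec m) 1) : (AffineLayer.id m).eval x = x := by
  funext j
  simpa [eval, AffineLayer.id, apply_ite (Rat.cast (K := ℝ)), ite_mul] using
    trReLU_eq_self (Vec.mem_Icc_iff.1 hx j)

end AffineLayer

namespace FNN

variable {m n m' n' : ℕ}

protected def id (m : ℕ) : FNN m m := ⟨0, fun _ => m, rfl, rfl, fun _ => AffineLayer.id m⟩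

def ofLayer (l : AffineLayer m n) : FNN m n :=
  ⟨1, fun i => Nat.rec m (fun _ _ => n) i, rfl, rfl, fun | 0 => l | _ + 1 => AffineLayer.id n⟩

lemma eval_ofLayer (l : AffineLayer m n) (x : Vec m) : (ofLayer l).eval x = l.eval x := rfl

lemma eq_of_depth_eq_zero (F : FNN m n) (h : F.depth = 0) : m = n :=
  F.dim_in.symm.trans (h ▸ F.dim_out)

lemma eval_of_depth_eq_zero (F : FNN m n) (h : F.depth = 0) (x : Vec m) :
    F.eval x = Vec.cast (F.eq_of_depth_eq_zero h) x := by
  obtain ⟨d, dims, dim_in, dim_out, layers⟩ := F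
  dsimp only at h
  subst h
  exact Vec.cast_cast _ _ x

lemma eval_mem_Icc (F : FNN m n) (h : F.depth ≠ 0) (x : Vec m) :
    F.eval x ∈ Icc (0 : Vec n) 1 := by
  obtain ⟨d, dims, dim_in, dim_out, layers⟩ := F
  obtain ⟨d, rfl⟩ := Nat.exists_eq_add_one_of_ne_zero h
  exact Vec.mem_Icc_iff.2 fun _ => trReLU_mem_Icc _

protected def cast (hm : m = m') (hn : n = n') (F : FNN m n) : FNN m' n' :=
  ⟨F.depth, F.dims, F.dim_in.trans hm, F.dim_out.trans hn, F.layers⟩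

lemma cast_heq (hm : m = m') (hn : n = n') (F : FNN m n) : HEq (F.cast hm hn) F := by
  subst hm hn; rfl

lemma eval_eq_cast_of_heq {F : FNN m n} {G : FNN m' n'} (hm : m = m') (hn : n = n')
    (h : HEq F G) (x : Vec m) : F.eval x = Vec.cast hn.symm (G.eval (Vec.cast hm x)) := by
  subst hm hn
  cases h
  rfl

/-- The coordinates `γ` pass through the truncated ReLUs unchanged only if they lie in
`[0, 1]`. -/
def carrying {M c : ℕ} (F : FNN m n) (h : F.depth ≠ 0) (ρ : Fin m → Fin M)
    (γ : Fin c → Fin M) : FNN M (n + c) where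
  depth := F.depth
  dims i := Nat.rec M (fun i _ => F.dims (i + 1) + c) i
  dim_in := rfl
  dim_out := by
    obtain ⟨d, hd⟩ := Nat.exists_eq_add_one_of_ne_zero h
    rw [hd]
    show F.dims (d + 1) + c = n + c
    rw [← hd, F.dim_out]
  layers
    | 0 => ((F.layers 0).reindex (ρ ∘ Fin.cast F.dim_in)).append
        ((AffineLayer.id c).reindex γ)
    | i + 1 => ((F.layers (i + 1)).reindex (Fin.castAdd c)).append
        ((AffineLayer.id c).reindex (Fin.natAdd _))

lemma evalAux_carrying {M c : ℕ} (F : FNN m n) (h : F.depth ≠ 0) (ρ : Fin m → Fin M)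
    (γ : Fin c → Fin M) {x : Vec M} (hx : x ∘ γ ∈ Icc (0 : Vec c) 1) (i : ℕ) :
    (F.carrying h ρ γ).evalAux (i + 1) x =
      Fin.append (F.evalAux (i + 1) (Vec.cast F.dim_in.symm (x ∘ ρ))) (x ∘ γ) := by
  induction i with
  | zero =>
    show ((F.layers 0).reindex _ |>.append _).eval x = _
    rw [AffineLayer.eval_append, AffineLayer.eval_reindex, AffineLayer.eval_reindex,
      AffineLayer.eval_id hx]
    rfl
  | succ i ih =>
    have hstep : (F.carrying h ρ γ).evalAux (i + 1 + 1) x =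
        ((F.carrying h ρ γ).layers (i + 1)).eval ((F.carrying h ρ γ).evalAux (i + 1) x) := rfl
    rw [hstep, ih]
    erw [AffineLayer.eval_append, AffineLayer.eval_reindex, AffineLayer.eval_reindex]
    exact congrArg₂ Fin.append
      (congrArg (F.layers (i + 1)).eval (Fin.append_comp_castAdd _ _))
      ((congrArg _ (Fin.append_comp_natAdd _ _)).trans (AffineLayer.eval_id hx))

lemma eval_carrying {M c : ℕ} (F : FNN m n) (h : F.depth ≠ 0) (ρ : Fin m → Fin M)
    (γ : Fin c → Fin M) {x : Vec M} (hx : x ∘ γ ∈ Icc (0 : Vec c) 1) :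
    (F.carrying h ρ γ).eval x = Fin.append (F.eval (x ∘ ρ)) (x ∘ γ) := by
  obtain ⟨d, hd⟩ := Nat.exists_eq_add_one_of_ne_zero h
  have key := F.evalAux_carrying h ρ γ hx d
  obtain ⟨depth, dims, dim_in, dim_out, layers⟩ := F
  dsimp only at hd
  subst hd dim_out
  exact key

end FNN

structure CarryLayout (e c : ℕ) where
  dim : ℕ
  embIdx : Fin e → Fin dim
  ctxIdx : Fin c → Fin dim

namespace CarryLayout

variable {e c e' : ℕ}

def Represents (L : CarryLayout e c) (x : Vec L.dim) (a : Vec e) (b : Vec c) : Prop :=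
  x ∘ L.embIdx = a ∧ x ∘ L.ctxIdx = b

def swap (L : CarryLayout e c) : CarryLayout c e := ⟨L.dim, L.ctxIdx, L.embIdx⟩

lemma represents_swap {L : CarryLayout e c} {x : Vec L.dim} {a : Vec e} {b : Vec c} :
    L.swap.Represents x b a ↔ L.Represents x a b :=
  and_comm

def pairIdx (L : CarryLayout e c) : Fin (e + e) → Fin (L.dim + L.dim) :=
  Fin.append (Fin.castAdd L.dim ∘ L.embIdx) (Fin.natAdd L.dim ∘ L.embIdx)

structure Step (L : CarryLayout e c) (e' : ℕ) where
  next : CarryLayout e' c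
  comb : FNN (L.dim + L.dim) next.dim

/-- A layer of depth `0` may output unbounded values, which only a layer of depth `0` can
reproduce. -/
def dupStep (L : CarryLayout e c) (h : e + e = e') : L.Step e' :=
  ⟨⟨L.dim + L.dim, L.pairIdx ∘ Fin.cast h.symm, Fin.castAdd L.dim ∘ L.ctxIdx⟩, FNN.id _⟩

def deepStep (L : CarryLayout e c) (F : FNN (e + e) e') (h : F.depth ≠ 0) : L.Step e' :=
  ⟨⟨e' + c, Fin.castAdd c, Fin.natAdd e'⟩, F.carrying h L.pairIdx (Fin.castAdd L.dim ∘ L.ctxIdx)⟩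

def step (L : CarryLayout e c) (F : FNN (e + e) e') : L.Step e' :=
  if h : F.depth = 0 then L.dupStep (F.eq_of_depth_eq_zero h) else L.deepStep F h

section Represents

variable (L : CarryLayout e c) {x y : Vec L.dim} {a a' : Vec e} {b : Vec c}

lemma append_comp_pairIdx (hx : x ∘ L.embIdx = a) (hy : y ∘ L.embIdx = a') :
    Fin.append x y ∘ L.pairIdx = Fin.append a a' := by
  rw [pairIdx, Fin.comp_append, ← Function.comp_assoc, ← Function.comp_assoc,
    Fin.append_comp_castAdd, Fin.append_comp_natAdd, hx, hy]

lemma append_comp_ctxIdx (hx : x ∘ L.ctxIdx = b) :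
    Fin.append x y ∘ (Fin.castAdd L.dim ∘ L.ctxIdx) = b := by
  rw [← Function.comp_assoc, Fin.append_comp_castAdd, hx]

lemma dupStep_represents (h : e + e = e') (hx : L.Represents x a b)
    (hy : y ∘ L.embIdx = a') :
    (L.dupStep h).next.Represents ((L.dupStep h).comb.eval (Fin.append x y))
      (Vec.cast h (Fin.append a a')) b :=
  ⟨by rw [← L.append_comp_pairIdx hx.1 hy]; rfl, L.append_comp_ctxIdx hx.2⟩

lemma deepStep_represents (F : FNN (e + e) e') (h : F.depth ≠ 0) (hx : L.Represents x a b)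
    (hy : y ∘ L.embIdx = a') (hb : b ∈ Icc (0 : Vec c) 1) :
    (L.deepStep F h).next.Represents ((L.deepStep F h).comb.eval (Fin.append x y))
      (F.eval (Fin.append a a')) b := by
  have hctx := L.append_comp_ctxIdx (y := y) hx.2
  refine ⟨?_, ?_⟩ <;> simp only [deepStep, FNN.eval_carrying _ _ _ _ (hctx ▸ hb),
    Fin.append_comp_castAdd, Fin.append_comp_natAdd, L.append_comp_pairIdx hx.1 hy, hctx]

lemma step_represents (F : FNN (e + e) e') (hx : L.Represents x a b) (hy : y ∘ L.embIdx = a')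
    (hb : F.depth ≠ 0 → b ∈ Icc (0 : Vec c) 1) :
    (L.step F).next.Represents ((L.step F).comb.eval (Fin.append x y))
      (F.eval (Fin.append a a')) b := by
  by_cases h : F.depth = 0
  · rw [step, dif_pos h, F.eval_of_depth_eq_zero h]
    exact L.dupStep_represents _ hx hy
  · rw [step, dif_neg h]
    exact L.deepStep_represents F h hx hy (hb h)

end Represents

end CarryLayout

lemma MPNN.emb_comp_cast (M : MPNN) {V : Type} [Fintype V] [DecidableEq V]
    (adj : V → V → Bool) (c : V → Vec (M.dims 0)) {i i' : ℕ} (h : i = i')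
    (e : M.dims i' = M.dims i) (v : V) :
    M.emb adj c i v ∘ Fin.cast e = M.emb adj c i' v := by
  subst h; rfl

namespace MPNNhat

variable {V : Type} [Fintype V] [DecidableEq V]

lemma emb_succ (N : MPNNhat) (adj : V → V → Bool) (lab : V → Vec (N.dims 0)) (i : ℕ)
    (v : V) :
    N.toMPNN.emb adj lab (i + 1) v = (N.comb i).eval (Fin.append (N.toMPNN.emb adj lab i v)
      (sumAgg (N.dims i)
        ((Finset.univ.filter fun u => adj v u = true).val.map (N.toMPNN.emb adj lab i)))) :=
  rfl

lemma emb_mem_Icc_of_depth_ne_zero (N : MPNNhat) (adj : V → V → Bool)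
    (lab : V → Vec (N.dims 0)) {i : ℕ} (h : (N.comb i).depth ≠ 0) (v : V) :
    N.toMPNN.emb adj lab (i + 1) v ∈ Icc (0 : Vec (N.dims (i + 1))) 1 :=
  (N.comb i).eval_mem_Icc h _

def carryLayout (N : MPNNhat) {c : ℕ} (L : CarryLayout (N.dims 0) c) :
    (j : ℕ) → CarryLayout (N.dims j) c
  | 0 => L
  | j + 1 => ((N.carryLayout L j).step (N.comb j)).next

def carry (N : MPNNhat) {c : ℕ} (L : CarryLayout (N.dims 0) c) (s : ℕ) : MPNNhat where
  depth := s
  dims j := (N.carryLayout L j).dim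
  comb j := ((N.carryLayout L j).step (N.comb j)).comb

lemma carry_emb_represents (N : MPNNhat) {c : ℕ} (L : CarryLayout (N.dims 0) c) (s : ℕ)
    (adj : V → V → Bool) {lab : V → Vec (N.dims 0)} {ctx : V → Vec c} {E : V → Vec L.dim}
    (hE : ∀ u, L.Represents (E u) (lab u) (ctx u)) (j : ℕ)
    (hb : ∀ i < j, (N.comb i).depth ≠ 0 → ∀ u, ctx u ∈ Icc (0 : Vec c) 1) (v : V) :
    (N.carryLayout L j).Represents ((N.carry L s).toMPNN.emb adj E j v)
      (N.toMPNN.emb adj lab j v) (ctx v) := by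
  induction j generalizing v with
  | zero => exact hE v
  | succ j ih =>
    have ih' := fun u => ih (fun i hi => hb i (Nat.lt_succ_of_lt hi)) u
    refine CarryLayout.step_represents _ _ (ih' v) ?_ (fun h => hb j j.lt_succ_self h v)
    refine (sumAgg_map_comp _ _ _).trans ?_
    exact congrArg _ (Multiset.map_congr rfl fun u _ => (ih' u).1)

def drop (N : MPNNhat) (s : ℕ) : MPNNhat :=
  ⟨N.depth - s, fun i => N.dims (s + i), fun i => N.comb (s + i)⟩

lemma emb_drop (N : MPNNhat) (s : ℕ) (adj : V → V → Bool) (lab : V → Vec (N.dims 0))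
    (j : ℕ) :
    (N.drop s).toMPNN.emb adj (N.toMPNN.emb adj lab s) j = N.toMPNN.emb adj lab (s + j) := by
  induction j with
  | zero => rfl
  | succ j ih =>
    funext v
    exact (emb_succ _ _ _ _ _).trans (by rw [ih]; rfl)

lemma emb_succ_eq_cast_of_heq (H K : MPNNhat) (adj : V → V → Bool)
    {labH : V → Vec (H.dims 0)} {labK : V → Vec (K.dims 0)} {i i' : ℕ}
    (hd : H.dims i = K.dims i') (hd' : H.dims (i + 1) = K.dims (i' + 1))
    (hc : HEq (H.comb i) (K.comb i'))
    (h : ∀ u, H.toMPNN.emb adj labH i u = Vec.cast hd.symm (K.toMPNN.emb adj labK i' u))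
    (v : V) :
    H.toMPNN.emb adj labH (i + 1) v = Vec.cast hd'.symm (K.toMPNN.emb adj labK (i' + 1) v) := by
  have hE : H.toMPNN.emb adj labH i = fun u => Vec.cast hd.symm (K.toMPNN.emb adj labK i' u) :=
    funext h
  refine (emb_succ _ _ _ _ _).trans ?_
  erw [hE, sumAgg_map_cast, Vec.cast_append, FNN.eval_eq_cast_of_heq (by rw [hd]) hd' hc,
    Vec.cast_cast]

def append (A B : MPNNhat) (h : A.dims A.depth = B.dims 0) : MPNNhat where
  depth := A.depth + B.depth
  dims i := if i ≤ A.depth then A.dims i else B.dims (i - A.depth)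
  comb i :=
    if hi : i < A.depth then
      (A.comb i).cast (by simp [hi.le]) (by simp [Nat.succ_le_of_lt hi])
    else
      (B.comb (i - A.depth)).cast
        (by
          rcases (not_lt.1 hi).eq_or_lt with hi' | hi'
          · simp [← hi', h]
          · simp [hi'.not_ge])
        (by simp [show ¬ i + 1 ≤ A.depth by omega, show i + 1 - A.depth = i - A.depth + 1 by omega])

section Append

variable (A B : MPNNhat) (h : A.dims A.depth = B.dims 0)

lemma dims_append_of_le {i : ℕ} (hi : i ≤ A.depth) : (A.append B h).dims i = A.dims i :=
  if_pos hi

lemma dims_append_add (j : ℕ) : (A.append B h).dims (A.depth + j) = B.dims j := by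
  show ite _ _ _ = _
  rcases j.eq_zero_or_pos with rfl | hj
  · simp [h]
  · simp [hj.ne']

lemma emb_append_of_le (adj : V → V → Bool) (lab : V → Vec (A.dims 0)) {i : ℕ}
    (hi : i ≤ A.depth) (v : V) :
    (A.append B h).toMPNN.emb adj
        (fun u => Vec.cast (A.dims_append_of_le B h (Nat.zero_le _)).symm (lab u)) i v =
      Vec.cast (A.dims_append_of_le B h hi).symm (A.toMPNN.emb adj lab i v) := by
  induction i generalizing v with
  | zero => rfl
  | succ i ih =>
    refine emb_succ_eq_cast_of_heq _ _ adj (A.dims_append_of_le B h (by omega))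
      (A.dims_append_of_le B h hi) ?_ (fun u => ih (by omega) u) v
    simp only [append, dif_pos (Nat.lt_of_succ_le hi)]
    exact FNN.cast_heq _ _ _

lemma emb_append_add (adj : V → V → Bool) (lab : V → Vec (A.dims 0)) (j : ℕ) (v : V) :
    (A.append B h).toMPNN.emb adj
        (fun u => Vec.cast (A.dims_append_of_le B h (Nat.zero_le _)).symm (lab u)) (A.depth + j) v =
      Vec.cast (A.dims_append_add B h j).symm
        (B.toMPNN.emb adj (fun u => Vec.cast h (A.toMPNN.emb adj lab A.depth u)) j v) := by
  induction j generalizing v with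
  | zero => exact (A.emb_append_of_le B h adj lab le_rfl v).trans (Vec.cast_cast h _ _).symm
  | succ j ih =>
    refine emb_succ_eq_cast_of_heq _ _ adj (A.dims_append_add B h j)
      (A.dims_append_add B h (j + 1)) ?_ ih v
    simp only [append, dif_neg (show ¬ A.depth + j < A.depth by omega)]
    refine (FNN.cast_heq _ _ _).trans ?_
    rw [Nat.add_sub_cancel_left]

lemma run_append (adj : V → V → Bool) {lab : V → Vec ((A.append B h).dims 0)}
    {labA : V → Vec (A.dims 0)} {labB : V → Vec (B.dims 0)}
    (hlab : ∀ u, lab u = Vec.cast (A.dims_append_of_le B h (Nat.zero_le _)).symm (labA u))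
    (hB : ∀ u, labB u = Vec.cast h (A.toMPNN.run adj labA u)) (v : V) :
    (A.append B h).toMPNN.run adj lab v =
      Vec.cast (A.dims_append_add B h B.depth).symm (B.toMPNN.run adj labB v) := by
  obtain rfl := funext hlab
  obtain rfl := funext hB
  exact A.emb_append_add B h adj labA B.depth v

end Append

def single {m n : ℕ} (F : FNN (m + m) n) : MPNNhat :=
  ⟨1, fun i => Nat.rec m (fun _ _ => n) i, fun i => match i with
    | 0 => F
    | _ + 1 => FNN.ofLayer ⟨0, 0⟩⟩

lemma run_single {m n : ℕ} (F : FNN (m + m) n) (adj : V → V → Bool) (lab : V → Vec m)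
    (v : V) :
    (single F).toMPNN.run adj lab v = F.eval (Fin.append (lab v)
      (sumAgg m ((Finset.univ.filter fun u => adj v u = true).val.map lab))) :=
  rfl

/-- The number of layers up to the last one of positive depth (`0` if there is none). -/
def lastDeep (N : MPNNhat) : ℕ :=
  Nat.findGreatest (fun j => j = 0 ∨ (N.comb (j - 1)).depth ≠ 0) N.depth

lemma lastDeep_le (N : MPNNhat) : N.lastDeep ≤ N.depth :=
  Nat.findGreatest_le _

lemma depth_comb_eq_zero_of_lastDeep_le (N : MPNNhat) {i : ℕ} (hi : N.lastDeep ≤ i)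
    (hi' : i < N.depth) : (N.comb i).depth = 0 := by
  simpa using Nat.findGreatest_is_greatest (Nat.lt_succ_of_le hi) hi'

lemma emb_lastDeep_mem_Icc (N : MPNNhat) (adj : V → V → Bool) {lab : V → Vec (N.dims 0)}
    (hlab : ∀ u, lab u ∈ Icc (0 : Vec (N.dims 0)) 1) (v : V) :
    N.toMPNN.emb adj lab N.lastDeep v ∈ Icc (0 : Vec (N.dims N.lastDeep)) 1 := by
  have hspec : N.lastDeep = 0 ∨ (N.comb (N.lastDeep - 1)).depth ≠ 0 :=
    Nat.findGreatest_spec (P := fun j => j = 0 ∨ (N.comb (j - 1)).depth ≠ 0)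
      (Nat.zero_le _) (Or.inl rfl)
  cases hj : N.lastDeep with
  | zero => exact hlab v
  | succ i =>
    rw [hj] at hspec
    exact N.emb_mem_Icc_of_depth_ne_zero adj lab (hspec.resolve_left i.succ_ne_zero) v

end MPNNhat

lemma TemporalGraph.colVec_mem_Icc {V : Type} {k : ℕ} (TG : TemporalGraph V k) (i : ℕ)
    (v : V) : TG.colVec i v ∈ Icc (0 : Vec k) 1 :=
  Vec.mem_Icc_iff.2 fun j => by unfold TemporalGraph.colVec; split <;> simp

namespace TandGTGNN

section Snapshot

variable (N₁ N₂ : MPNNhat) (C : AffineLayer (N₁.dims N₁.depth + N₂.dims N₂.depth) (N₂.dims 0))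

/-- The input `colours ∥ state` of a recursive TGNN, with the state as input of `N₂` and the
colours as context. -/
def inputLayout : CarryLayout (N₂.dims 0) (N₁.dims 0) :=
  ⟨N₁.dims 0 + N₂.dims 0, Fin.natAdd _, Fin.castAdd _⟩

def layoutA : CarryLayout (N₂.dims N₂.lastDeep) (N₁.dims 0) :=
  N₂.carryLayout (inputLayout N₁ N₂) N₂.lastDeep

def layoutB : CarryLayout (N₁.dims N₁.depth) (N₂.dims N₂.lastDeep) :=
  N₁.carryLayout (layoutA N₁ N₂).swap N₁.depth

def layoutC :
    CarryLayout ((N₂.drop N₂.lastDeep).dims (N₂.depth - N₂.lastDeep)) (N₁.dims N₁.depth) :=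
  (N₂.drop N₂.lastDeep).carryLayout (layoutB N₁ N₂).swap (N₂.depth - N₂.lastDeep)

def phaseA : MPNNhat := N₂.carry (inputLayout N₁ N₂) N₂.lastDeep

def phaseB : MPNNhat := N₁.carry (layoutA N₁ N₂).swap N₁.depth

def phaseC : MPNNhat :=
  (N₂.drop N₂.lastDeep).carry (layoutB N₁ N₂).swap (N₂.depth - N₂.lastDeep)

lemma dims_depth_eq_drop_lastDeep :
    N₂.dims N₂.depth = (N₂.drop N₂.lastDeep).dims (N₂.depth - N₂.lastDeep) := by
  show _ = N₂.dims (_ + _)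
  rw [Nat.add_sub_cancel' N₂.lastDeep_le]

def readoutIdx : Fin (N₁.dims N₁.depth + N₂.dims N₂.depth) →
    Fin ((layoutC N₁ N₂).dim + (layoutC N₁ N₂).dim) :=
  Fin.castAdd _ ∘ Fin.append (layoutC N₁ N₂).ctxIdx
    ((layoutC N₁ N₂).embIdx ∘ Fin.cast (dims_depth_eq_drop_lastDeep N₂))

def readout : MPNNhat := MPNNhat.single (FNN.ofLayer (C.reindex (readoutIdx N₁ N₂)))

def snapshotNet : MPNNhat :=
  (((phaseA N₁ N₂).append (phaseB N₁ N₂) rfl).append (phaseC N₁ N₂)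
    (MPNNhat.dims_append_add _ _ _ _)).append (readout N₁ N₂ C) (MPNNhat.dims_append_add _ _ _ _)

lemma snapshotNet_dims_zero : (snapshotNet N₁ N₂ C).dims 0 = N₁.dims 0 + N₂.dims 0 :=
  (MPNNhat.dims_append_of_le _ _ _ (Nat.zero_le _)).trans
    ((MPNNhat.dims_append_of_le _ _ _ (Nat.zero_le _)).trans
      (MPNNhat.dims_append_of_le _ _ _ (Nat.zero_le _)))

lemma snapshotNet_dims_depth :
    (snapshotNet N₁ N₂ C).dims (snapshotNet N₁ N₂ C).depth = N₂.dims 0 :=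
  MPNNhat.dims_append_add _ _ _ 1

variable {V : Type} [Fintype V] [DecidableEq V] (adj : V → V → Bool)
  {lab₁ : V → Vec (N₁.dims 0)} {lab₂ : V → Vec (N₂.dims 0)}

lemma phaseA_represents (h₁ : ∀ u, lab₁ u ∈ Icc (0 : Vec (N₁.dims 0)) 1) (v : V) :
    (layoutA N₁ N₂).Represents
      ((phaseA N₁ N₂).toMPNN.run adj (fun u => Fin.append (lab₁ u) (lab₂ u)) v)
      (N₂.toMPNN.emb adj lab₂ N₂.lastDeep v) (lab₁ v) :=
  N₂.carry_emb_represents _ _ adj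
    (fun _ => ⟨Fin.append_comp_natAdd _ _, Fin.append_comp_castAdd _ _⟩) _ (fun _ _ _ => h₁) v

lemma phaseB_represents (h₁ : ∀ u, lab₁ u ∈ Icc (0 : Vec (N₁.dims 0)) 1)
    (h₂ : ∀ u, lab₂ u ∈ Icc (0 : Vec (N₂.dims 0)) 1) (v : V) :
    (layoutB N₁ N₂).Represents
      ((phaseB N₁ N₂).toMPNN.run adj
        ((phaseA N₁ N₂).toMPNN.run adj (fun u => Fin.append (lab₁ u) (lab₂ u))) v)
      (N₁.toMPNN.run adj lab₁ v) (N₂.toMPNN.emb adj lab₂ N₂.lastDeep v) :=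
  N₁.carry_emb_represents _ _ adj
    (fun u => CarryLayout.represents_swap.2 (phaseA_represents N₁ N₂ adj h₁ u)) _
    (fun _ _ _ => N₂.emb_lastDeep_mem_Icc adj h₂) v

lemma phaseC_represents (h₁ : ∀ u, lab₁ u ∈ Icc (0 : Vec (N₁.dims 0)) 1)
    (h₂ : ∀ u, lab₂ u ∈ Icc (0 : Vec (N₂.dims 0)) 1) (v : V) :
    (layoutC N₁ N₂).Represents
      ((phaseC N₁ N₂).toMPNN.run adj ((phaseB N₁ N₂).toMPNN.run adj
        ((phaseA N₁ N₂).toMPNN.run adj (fun u => Fin.append (lab₁ u) (lab₂ u)))) v)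
      (N₂.toMPNN.emb adj lab₂ (N₂.lastDeep + (N₂.depth - N₂.lastDeep)) v)
      (N₁.toMPNN.run adj lab₁ v) := by
  rw [← N₂.emb_drop]
  refine (N₂.drop N₂.lastDeep).carry_emb_represents _ _ adj
    (fun u => CarryLayout.represents_swap.2 (phaseB_represents N₁ N₂ adj h₁ h₂ u)) _
    (fun i hi hdeep => absurd ?_ hdeep) v
  exact N₂.depth_comb_eq_zero_of_lastDeep_le (Nat.le_add_right _ _) (by omega)

lemma run_readout (E : V → Vec (layoutC N₁ N₂).dim) (v : V) :
    (readout N₁ N₂ C).toMPNN.run adj E v = C.eval (Fin.append (E v ∘ (layoutC N₁ N₂).ctxIdx)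
      ((E v ∘ (layoutC N₁ N₂).embIdx) ∘ Fin.cast (dims_depth_eq_drop_lastDeep N₂))) := by
  refine (MPNNhat.run_single _ adj E v).trans ?_
  rw [FNN.eval_ofLayer, AffineLayer.eval_reindex, readoutIdx, ← Function.comp_assoc,
    Fin.append_comp_castAdd]
  exact congrArg C.eval (Fin.comp_append _ _ _)

lemma run_snapshotNet_eq_phases (x : V → Vec (N₁.dims 0 + N₂.dims 0))
    {E : V → Vec ((snapshotNet N₁ N₂ C).dims 0)}
    (hE : ∀ u, E u = Vec.cast (snapshotNet_dims_zero N₁ N₂ C).symm (x u)) (v : V) :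
    (snapshotNet N₁ N₂ C).toMPNN.run adj E v = Vec.cast (snapshotNet_dims_depth N₁ N₂ C).symm
      ((readout N₁ N₂ C).toMPNN.run adj ((phaseC N₁ N₂).toMPNN.run adj
        ((phaseB N₁ N₂).toMPNN.run adj ((phaseA N₁ N₂).toMPNN.run adj x))) v) := by
  set A := phaseA N₁ N₂
  set B := phaseB N₁ N₂
  have hAB : ∀ u, (A.append B rfl).toMPNN.run adj
      (fun u => Vec.cast (A.dims_append_of_le B rfl (Nat.zero_le _)).symm (x u)) u =
      Vec.cast (A.dims_append_add B rfl B.depth).symm (B.toMPNN.run adj (A.toMPNN.run adj x) u) :=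
    A.run_append B rfl adj (fun _ => rfl) (fun _ => rfl)
  have hABC := (A.append B rfl).run_append (phaseC N₁ N₂) (MPNNhat.dims_append_add _ _ _ _) adj
    (labA := fun u => Vec.cast (A.dims_append_of_le B rfl (Nat.zero_le _)).symm (x u))
    (labB := B.toMPNN.run adj (A.toMPNN.run adj x))
    (fun _ => (Vec.cast_cast _ _ _).symm)
    (fun u => ((congrArg _ (hAB u)).trans (Vec.cast_cast _ _ _)).symm)
  exact MPNNhat.run_append _ _ _ adj (fun u => (hE u).trans (Vec.cast_cast _ _ _).symm)
    (fun u => ((congrArg _ (hABC u)).trans (Vec.cast_cast _ _ _)).symm) v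

theorem run_snapshotNet (h₁ : ∀ u, lab₁ u ∈ Icc (0 : Vec (N₁.dims 0)) 1)
    (h₂ : ∀ u, lab₂ u ∈ Icc (0 : Vec (N₂.dims 0)) 1) {E : V → Vec ((snapshotNet N₁ N₂ C).dims 0)}
    (hE : ∀ u, E u = Vec.cast (snapshotNet_dims_zero N₁ N₂ C).symm (Fin.append (lab₁ u) (lab₂ u)))
    (v : V) :
    (snapshotNet N₁ N₂ C).toMPNN.run adj E v = Vec.cast (snapshotNet_dims_depth N₁ N₂ C).symm
      (C.eval (Fin.append (N₁.toMPNN.run adj lab₁ v) (N₂.toMPNN.run adj lab₂ v))) := by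
  obtain ⟨hemb, hctx⟩ := phaseC_represents N₁ N₂ adj h₁ h₂ v
  refine (run_snapshotNet_eq_phases N₁ N₂ C adj _ hE v).trans
    (congrArg _ ((run_readout N₁ N₂ C adj _ v).trans ?_))
  rw [hctx, hemb]
  exact congrArg (fun y => C.eval (Fin.append _ y))
    (MPNN.emb_comp_cast _ _ _ (Nat.add_sub_cancel' N₂.lastDeep_le) _ v)

end Snapshot

noncomputable def ofHat (N₁ N₂ : MPNNhat) (sd : N₁.depth = N₂.depth)
    (C : AffineLayer (N₁.dims N₁.depth + N₂.dims N₂.depth) (N₂.dims 0))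
    (O : AffineLayer (N₂.dims 0) 1) : TandGTGNN (N₁.dims 0) :=
  ⟨N₁.toMPNN, N₂.toMPNN, sd, N₂.dims 0, rfl, rfl, fun x y => C.eval (Fin.append x y),
    fun x => O.eval x 0⟩

def recOfHat (N₁ N₂ : MPNNhat)
    (C : AffineLayer (N₁.dims N₁.depth + N₂.dims N₂.depth) (N₂.dims 0))
    (O : AffineLayer (N₂.dims 0) 1) : RecTGNN (N₁.dims 0) where
  M := snapshotNet N₁ N₂ C
  dim_in := (snapshotNet_dims_zero N₁ N₂ C).trans
    (congrArg _ (snapshotNet_dims_depth N₁ N₂ C).symm)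
  out := O.reindex (Fin.cast (snapshotNet_dims_depth N₁ N₂ C).symm)

variable (N₁ N₂ : MPNNhat) (sd : N₁.depth = N₂.depth)
  (C : AffineLayer (N₁.dims N₁.depth + N₂.dims N₂.depth) (N₂.dims 0))
  (O : AffineLayer (N₂.dims 0) 1)
  {V : Type} [Fintype V] [DecidableEq V] (TG : TemporalGraph V (N₁.dims 0))

lemma ofHat_state_mem_Icc (i : ℕ) (v : V) :
    (ofHat N₁ N₂ sd C O).state TG i v ∈ Icc (0 : Vec (N₂.dims 0)) 1 := by
  cases i <;> exact C.eval_mem_Icc _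

lemma state_recOfHat (i : ℕ) (v : V) :
    (recOfHat N₁ N₂ C O).state TG i v =
      Vec.cast (snapshotNet_dims_depth N₁ N₂ C).symm ((ofHat N₁ N₂ sd C O).state TG i v) := by
  induction i generalizing v with
  | zero =>
    rw [RecTGNN.state]
    exact run_snapshotNet N₁ N₂ C _ (lab₁ := TG.colVec 0) (lab₂ := fun _ => 0)
      (TG.colVec_mem_Icc 0) (fun _ => ⟨le_rfl, zero_le_one⟩)
      (fun _ => Vec.cast_append_cast _ _ (snapshotNet_dims_depth N₁ N₂ C).symm _ _) v
  | succ i ih =>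
    rw [RecTGNN.state]
    refine run_snapshotNet N₁ N₂ C _ (lab₁ := TG.colVec (i + 1))
      (lab₂ := (ofHat N₁ N₂ sd C O).state TG i) (TG.colVec_mem_Icc (i + 1))
      (ofHat_state_mem_Icc N₁ N₂ sd C O TG i) (fun u => ?_) v
    exact (congrArg (fun s => Vec.cast _ (Fin.append _ s)) (ih u)).trans
      (Vec.cast_append_cast _ _ _ _ _)

lemma output_recOfHat (v : V) :
    (recOfHat N₁ N₂ C O).output TG v = (ofHat N₁ N₂ sd C O).output TG v := by
  refine (congrFun (AffineLayer.eval_reindex O _ _) 0).trans ?_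
  rw [state_recOfHat N₁ N₂ sd]
  rfl

end TandGTGNN

/-- Theorem 7, `T_TandG[M̂,F] ≤ T_rec[M̂]`: every time-and-graph TGNN of
the class `T_TandG[M̂,F]` is equivalent to some recursive TGNN over `M̂`. -/
theorem TandG_le_Trec :
    ∀ (k : ℕ) (T : TandGTGNN k), T.inHatF →
      ∃ T' : RecTGNN k,
        ∀ (V : Type) [Fintype V] [DecidableEq V], ∀ (TG : TemporalGraph V k) (v : V),
          (T.output TG v = 1 ↔ T'.output TG v = 1) := by
  rintro k ⟨M₁, M₂, sd, hdim, dim1, dim2, cell, out⟩ ⟨⟨N₁, rfl⟩, ⟨N₂, rfl⟩, ⟨C, hC⟩, ⟨O, hO⟩⟩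
  subst dim1 dim2
  dsimp only at C O hC hO
  obtain rfl : cell = fun x y => C.eval (Fin.append x y) := funext₂ hC
  obtain rfl : out = fun x => O.eval x 0 := funext hO
  exact ⟨TandGTGNN.recOfHat N₁ N₂ C O, fun V _ _ TG v =>
    Iff.of_eq (congrArg (· = 1) (TandGTGNN.output_recOfHat N₁ N₂ sd C O TG v).symm)⟩
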